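/- For d ≥ 2 and the map σ_d(θ) = dθ mod 1: if v ∈ ℝ/ℤ is fixed by σ_d and (x_i), (v_i) are sequences in ℝ/ℤ with σ_d(x_{i+1}) = x_i, σ_d(v_{i+1}) = v_i, v_i → v monotonically, and x_i → y with y contained in a closed arc containing no fixed point of σ_d other than possibly its endpoint x, then σ_d(y) = y, and hence y = x. -/

import Mathlib

/-- The angle `d`-tupling map `σ_d(θ) = d·θ (mod 1)` on the circle `ℝ/ℤ`. -/
noncomputable def sigmaMap (d : ℕ) (θ : UnitAddCircle) : UnitAddCircle := d • θ

open Filter Topology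

theorem isFixedPt_of_tendsto_of_backward_orbit {X : Type*} [TopologicalSpace X] [T2Space X]
    {f : X → X} {xs : ℕ → X} {y : X} (hf : ContinuousAt f y)
    (horbit : ∀ i, f (xs (i + 1)) = xs i) (hlim : Tendsto xs atTop (𝓝 y)) :
    Function.IsFixedPt f y := by
  have hshift : Tendsto (fun i ↦ xs (i + 1)) atTop (𝓝 y) :=
    hlim.comp (tendsto_add_atTop_nat 1)
  have himage : Tendsto (fun i ↦ f (xs (i + 1))) atTop (𝓝 (f y)) := hf.tendsto.comp hshift
  simp only [horbit] at himage
  exact tendsto_nhds_unique himage hlim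

theorem continuous_sigmaMap (d : ℕ) : Continuous (sigmaMap d) :=
  continuous_id.nsmul d

theorem limit_leaf_endpoint_fixed_general (d : ℕ)
    (x : UnitAddCircle) (xs : ℕ → UnitAddCircle)
    (hx : ∀ i, sigmaMap d (xs (i + 1)) = xs i)
    (y : UnitAddCircle) (hylim : Filter.Tendsto xs Filter.atTop (nhds y))
    (A : Set UnitAddCircle) (hyA : y ∈ A)
    (honly : ∀ t ∈ A, sigmaMap d t = t → t = x) :
    sigmaMap d y = y ∧ y = x := by
  have hfix : sigmaMap d y = y :=
    isFixedPt_of_tendsto_of_backward_orbit (continuous_sigmaMap d).continuousAt hx hylim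
  exact ⟨hfix, honly y hyA hfix⟩

/-- Let `d ≥ 2`, let `v` be a fixed point of `σ_d`, and let `(x i)`,
`(v i)` be sequences with `σ_d (x (i+1)) = x i`, `σ_d (v (i+1)) = v i`, `v i → v`,
and `x i → y`, where `y` lies in a closed arc `A` whose only fixed point of `σ_d`
is (possibly) its endpoint `x`.  Then `σ_d y = y`, and hence `y = x`. -/
theorem limit_leaf_endpoint_fixed (d : ℕ) (hd : 2 ≤ d)
    (v : UnitAddCircle) (hv : sigmaMap d v = v)
    (x : UnitAddCircle) (xs vs : ℕ → UnitAddCircle)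
    (hx : ∀ i, sigmaMap d (xs (i + 1)) = xs i)
    (hvs : ∀ i, sigmaMap d (vs (i + 1)) = vs i)
    (hvlim : Filter.Tendsto vs Filter.atTop (nhds v))
    (y : UnitAddCircle) (hylim : Filter.Tendsto xs Filter.atTop (nhds y))
    (A : Set UnitAddCircle) (hA : IsClosed A) (hyA : y ∈ A) (hxA : x ∈ A)
    (honly : ∀ t ∈ A, sigmaMap d t = t → t = x) :
    sigmaMap d y = y ∧ y = x :=
  limit_leaf_endpoint_fixed_general d x xs hx y hylim A hyA honly
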